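/- arXiv:0801.2097 — 3 statements merged into one kernel-verified Lean document; each statement's English description precedes it below -/
import Mathlib

section
/- For every nonempty computably enumerable set B that is disjoint from some infinite computable set, there exists a computable permutation π of ℕ such that π⁻¹(B) is self-constructing (equivalently, B = π(A) for some self-constructing set A). -/
/-- The e-th partial computable function in a standard numbering. -/
def phi (e : ℕ) : ℕ →. ℕ :=
  Nat.Partrec.Code.eval (Denumerable.ofNat Nat.Partrec.Code e)

/-- W e is the domain of the e-th partial computable function. -/
def W (e : ℕ) : Set ℕ := (phi e).Dom


/-- A set is computably enumerable iff it is W e for some e. -/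
def CE (A : Set ℕ) : Prop := ∃ e, W e = A

/-- A nonempty c.e. set A is self-constructing if W e = A for every e ∈ A. -/
def SelfConstructing (A : Set ℕ) : Prop :=
  A.Nonempty ∧ CE A ∧ ∀ e ∈ A, W e = A

/-!
By the two-parameter recursion theorem there is a code `c` such that, writing `h b` for the index
of `curry c b`, every `W (h n)` equals `h '' B`; hence `h '' B` is self-constructing. The map `h`
is primitive recursive, strictly increasing and takes only even values, so its range `R` is
decidable and coinfinite. Enumerating `R` and its complement gives `ℕ ≃ ℕ ⊕ ℕ` sending `h b` to
`inl b`, and the infinite decidable set `E` disjoint from `B` serves as a Hilbert hotel absorbing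
the right summand without disturbing membership in `B`. The composite permutation `π` satisfies
`π ⁻¹' B = h '' B`.
-/

open Encodable Denumerable

namespace Nat

section Equivs

variable (p : ℕ → Prop) [DecidablePred p]

noncomputable def nthSumEquiv (hp : {n | p n}.Infinite) (hnp : {n | ¬p n}.Infinite) :
    ℕ ⊕ ℕ ≃ ℕ where
  toFun := Sum.elim (nth p) (nth (¬p ·))
  invFun n := if p n then .inl (count p n) else .inr (count (¬p ·) n)
  left_inv := by
    rintro (k | k)
    · simp [nth_mem_of_infinite hp, count_nth_of_infinite hp]
    · simp [nth_mem_of_infinite hnp k, count_nth_of_infinite hnp]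
  right_inv n := by
    by_cases h : p n <;> simp [h, nth_count]

/-- Hilbert's hotel inside `p`: after renumbering `p` by `count p`, its elements are split into
two copies of `ℕ` by the interleaving `ℕ ⊕ ℕ ≃ ℕ`; the left summand is the identity off `p`. -/
noncomputable def absorbSumEquiv (hp : {n | p n}.Infinite) : ℕ ⊕ ℕ ≃ ℕ where
  toFun := Sum.elim (fun n => if p n then nth p (encode (.inl (count p n) : ℕ ⊕ ℕ)) else n)
    (fun k => nth p (encode (.inr k : ℕ ⊕ ℕ)))
  invFun n := if p n then (ofNat (ℕ ⊕ ℕ) (count p n)).map (nth p) id else .inl n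
  left_inv := by
    rintro (n | k)
    · by_cases h : p n <;>
        simp [-encode_inl, h, nth_mem_of_infinite hp, count_nth_of_infinite hp, nth_count]
    · simp [-encode_inr, nth_mem_of_infinite hp, count_nth_of_infinite hp]
  right_inv n := by
    by_cases h : p n
    · have hn : nth p (encode (ofNat (ℕ ⊕ ℕ) (count p n))) = n := by
        rw [encode_ofNat, nth_count h]
      rcases hd : ofNat (ℕ ⊕ ℕ) (count p n) with j | k <;> rw [hd] at hn
      · simpa [-encode_inl, h, hd, nth_mem_of_infinite hp, count_nth_of_infinite hp] using hn
      · simpa [-encode_inr, h, hd] using hn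
    · simp [h]

theorem nthSumEquiv_image_inl (hp : {n | p n}.Infinite) (hnp : {n | ¬p n}.Infinite)
    (S : Set ℕ) : nthSumEquiv p hp hnp '' (Sum.inl '' S) = nth p '' S := by
  rw [Set.image_image]
  rfl

theorem absorbSumEquiv_preimage (hp : {n | p n}.Infinite) {B : Set ℕ}
    (hB : Disjoint B {n | p n}) : absorbSumEquiv p hp ⁻¹' B = Sum.inl '' B := by
  have hnB {n} (hn : p n) : n ∉ B := fun h => Set.disjoint_left.1 hB h hn
  ext (n | k)
  · by_cases h : p n
    · simp [absorbSumEquiv, h, hnB h, hnB (nth_mem_of_infinite hp _)]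
    · simp [absorbSumEquiv, h]
  · simp [absorbSumEquiv, hnB (nth_mem_of_infinite hp _)]

end Equivs

section Computability

variable {p : ℕ → Prop} [DecidablePred p]

theorem computable_count (hpc : Computable fun n => decide (p n)) : Computable (count p) := by
  have : Computable fun n =>
      Nat.rec (motive := fun _ => ℕ) 0 (fun k c => c + bif decide (p k) then 1 else 0) n :=
    Computable.nat_rec .id (.const 0)
      (Primrec.nat_add.to_comp.comp (Computable.snd.comp .snd)
        (.cond (hpc.comp (Computable.fst.comp .snd)) (.const 1) (.const 0))).to₂
  refine this.of_eq fun n => ?_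
  induction n with
  | zero => rfl
  | succ n ih => simp only [count_succ, ← ih, Bool.cond_decide]

theorem computable_nth (hpc : Computable fun n => decide (p n)) (hp : {n | p n}.Infinite) :
    Computable (nth p) := by
  have hex (k : ℕ) : ∃ n, p n ∧ count p n = k :=
    ⟨nth p k, nth_mem_of_infinite hp k, count_nth_of_infinite hp k⟩
  have hpred : ComputablePred fun q : ℕ × ℕ => p q.2 ∧ count p q.2 = q.1 :=
    Computable.computablePred <| (Primrec.and.to_comp.comp (hpc.comp .snd)
      (Primrec.beq.to_comp.comp ((computable_count hpc).comp .snd) .fst)).of_eq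
      fun q => by simp [Bool.beq_eq_decide_eq]
  refine (Computable.find hpred hex).of_eq fun k => ?_
  obtain ⟨hpn, hcount⟩ := Nat.find_spec (hex k)
  exact (hcount ▸ nth_count hpn).symm

theorem computable_nthSumEquiv (hpc : Computable fun n => decide (p n))
    (hp : {n | p n}.Infinite) (hnp : {n | ¬p n}.Infinite) :
    Computable (nthSumEquiv p hp hnp) := by
  have hnpc : Computable fun n => decide (¬p n) :=
    (Primrec.not.to_comp.comp hpc).of_eq fun n => by simp
  exact (Computable.sumCasesOn .id ((computable_nth hpc hp).comp .snd).to₂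
    ((computable_nth hnpc hnp).comp .snd).to₂).of_eq fun | .inl _ => rfl | .inr _ => rfl

theorem computable_nthSumEquiv_symm (hpc : Computable fun n => decide (p n))
    (hp : {n | p n}.Infinite) (hnp : {n | ¬p n}.Infinite) :
    Computable (nthSumEquiv p hp hnp).symm := by
  have hnpc : Computable fun n => decide (¬p n) :=
    (Primrec.not.to_comp.comp hpc).of_eq fun n => by simp
  exact (Computable.cond hpc (Computable.sumInl.comp (computable_count hpc))
    (Computable.sumInr.comp (computable_count hnpc))).of_eq fun n => by
      simp [nthSumEquiv, Bool.cond_decide]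

theorem computable_absorbSumEquiv (hpc : Computable fun n => decide (p n))
    (hp : {n | p n}.Infinite) : Computable (absorbSumEquiv p hp) := by
  have hnth := computable_nth hpc hp
  have hleft : Computable fun n => if p n then nth p (encode (.inl (count p n) : ℕ ⊕ ℕ)) else n :=
    (Computable.cond hpc (hnth.comp (Computable.encode.comp
      (Computable.sumInl.comp (computable_count hpc)))) .id).of_eq fun n => by
        simp only [Bool.cond_decide, id]
        rfl
  exact (Computable.sumCasesOn .id (hleft.comp .snd).to₂
    (hnth.comp (Computable.encode.comp (Computable.sumInr.comp .snd))).to₂).of_eq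
    fun | .inl _ => rfl | .inr _ => rfl

theorem computable_absorbSumEquiv_symm (hpc : Computable fun n => decide (p n))
    (hp : {n | p n}.Infinite) : Computable (absorbSumEquiv p hp).symm := by
  have hnth := computable_nth hpc hp
  have hmap : Computable fun n => (ofNat (ℕ ⊕ ℕ) (count p n)).map (nth p) id :=
    (Computable.sumCasesOn ((Computable.ofNat _).comp (computable_count hpc))
      (Computable.sumInl.comp (hnth.comp .snd)).to₂ (Computable.sumInr.comp .snd).to₂).of_eq
      fun n => by cases ofNat (ℕ ⊕ ℕ) (count p n) <;> rfl
  exact (Computable.cond hpc hmap Computable.sumInl).of_eq fun n => by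
    simp [absorbSumEquiv, Bool.cond_decide]

end Computability

end Nat

theorem StrictMono.primrecPred_mem_range {h : ℕ → ℕ} (hm : StrictMono h) (hh : Primrec h) :
    PrimrecPred (· ∈ Set.range h) := by
  have hgraph : PrimrecRel fun b x => h b = x := Primrec.eq.comp (hh.comp .fst) .snd
  refine (hgraph.exists_lt.comp Primrec.succ .id).of_eq fun x => ?_
  exact ⟨fun ⟨b, _, hb⟩ => ⟨b, hb⟩, fun ⟨b, hb⟩ => ⟨b, Nat.lt_succ_of_le (hb ▸ hm.id_le b), hb⟩⟩

theorem StrictMono.nth_mem_range_eq {h : ℕ → ℕ} (hm : StrictMono h) :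
    Nat.nth (· ∈ Set.range h) = h := by
  have hinf : (Set.range h).Infinite := Set.infinite_range_of_injective hm.injective
  refine (StrictMono.range_inj (Nat.nth_strictMono hinf) hm).1 ?_
  rw [Nat.range_nth_of_infinite hinf]
  rfl

theorem exists_computable_equiv_preimage_eq_image {B E : Set ℕ} (hE : E.Infinite)
    (hEc : ComputablePred (· ∈ E)) (hBE : Disjoint B E) {h : ℕ → ℕ} (hm : StrictMono h)
    (hR : ComputablePred (· ∈ Set.range h)) (hRc : (Set.range h)ᶜ.Infinite) :
    ∃ π : ℕ ≃ ℕ, Computable π ∧ Computable π.symm ∧ π ⁻¹' B = h '' B := by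
  obtain ⟨_, hEc⟩ := hEc
  obtain ⟨_, hR⟩ := hR
  have hRinf : (Set.range h).Infinite := Set.infinite_range_of_injective hm.injective
  let γ := Nat.nthSumEquiv (· ∈ Set.range h) hRinf hRc
  let β := Nat.absorbSumEquiv (· ∈ E) hE
  refine ⟨γ.symm.trans β, ?_, ?_, ?_⟩
  · exact (Nat.computable_absorbSumEquiv hEc hE).comp
      (Nat.computable_nthSumEquiv_symm hR hRinf hRc)
  · exact (Nat.computable_nthSumEquiv hR hRinf hRc).comp
      (Nat.computable_absorbSumEquiv_symm hEc hE)
  · rw [Equiv.coe_trans, Set.preimage_comp, Nat.absorbSumEquiv_preimage (· ∈ E) hE hBE,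
      ← Equiv.image_eq_preimage_symm, Nat.nthSumEquiv_image_inl, hm.nth_mem_range_eq]

open Nat.Partrec Code

theorem mem_W_iff {e x : ℕ} : x ∈ W e ↔ (eval (ofNat Code e) x).Dom := Iff.rfl

theorem CE.exists_primrec_range_eq {B : Set ℕ} (hB : CE B) (hne : B.Nonempty) :
    ∃ f : ℕ → ℕ, Primrec f ∧ Set.range f = B := by
  obtain ⟨e, rfl⟩ := hB
  obtain ⟨b₀, hb₀⟩ := hne
  refine ⟨fun k =>
    bif (evaln k.unpair.2 (ofNat Code e) k.unpair.1).isSome then k.unpair.1 else b₀, ?_, ?_⟩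
  · exact Primrec.cond (Primrec.option_isSome.comp (primrec_evaln.comp
      (((Primrec.snd.comp .unpair).pair (.const _)).pair (Primrec.fst.comp .unpair))))
      (Primrec.fst.comp .unpair) (.const b₀)
  · ext x
    constructor
    · rintro ⟨k, rfl⟩
      cases hk : (evaln k.unpair.2 (ofNat Code e) k.unpair.1).isSome
      · simpa [hk] using hb₀
      · obtain ⟨v, hv⟩ := Option.isSome_iff_exists.1 hk
        simpa [hk, mem_W_iff] using Part.dom_iff_mem.2 ⟨v, evaln_complete.2 ⟨_, hv⟩⟩
    · intro hx
      obtain ⟨v, hv⟩ := Part.dom_iff_mem.1 (mem_W_iff.1 hx)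
      obtain ⟨s, hs⟩ := evaln_complete.1 hv
      exact ⟨Nat.pair x s, by simp [Option.isSome_iff_exists.2 ⟨v, hs⟩]⟩

theorem exists_code_W_curry_eq_image {B : Set ℕ} (hB : CE B) (hne : B.Nonempty) :
    ∃ c : Code, ∀ n, W (encode (curry c n)) = (fun b => encode (curry c b)) '' B := by
  obtain ⟨f, hf, rfl⟩ := hB.exists_primrec_range_eq hne
  let F : Code → ℕ →. ℕ := fun z m =>
    Nat.rfindOpt fun k => if m.unpair.2 = encode (curry z (f k)) then some 0 else none
  have hF : Partrec₂ F := by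
    have hcode : Primrec fun q : (Code × ℕ) × ℕ => encode (curry q.1.1 (f q.2)) :=
      Primrec.encode.comp (primrec₂_curry.comp (Primrec.fst.comp .fst) (hf.comp .snd))
    have harg : Primrec fun q : (Code × ℕ) × ℕ => q.1.2.unpair.2 :=
      Primrec.snd.comp (Primrec.unpair.comp (Primrec.snd.comp .fst))
    exact Partrec.rfindOpt (Primrec.to_comp (Primrec.ite (Primrec.eq.comp harg hcode)
      (.const (some 0)) (.const none))).to₂
  obtain ⟨c, hc⟩ := fixed_point₂ hF
  refine ⟨c, fun n => Set.ext fun x => ?_⟩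
  rw [mem_W_iff, ofNat_encode, eval_curry, hc, Nat.rfindOpt_dom]
  simp [eq_comm]

theorem encode_curry_strictMono (c : Code) : StrictMono fun n => encode (curry c n) := by
  intro m n hmn
  have hconst : encode (Code.const m) < encode (Code.const n) :=
    strictMono_nat_of_lt_succ (fun k => (encode_lt_comp succ (Code.const k)).2) hmn
  simp only [curry, encodeCode_eq, encodeCode] at hconst ⊢
  have := Nat.pair_lt_pair_left (encodeCode Code.id) hconst
  have := Nat.pair_lt_pair_right (encodeCode c) (by omega :
    2 * (2 * Nat.pair (encodeCode (Code.const m)) (encodeCode Code.id)) + 4 <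
      2 * (2 * Nat.pair (encodeCode (Code.const n)) (encodeCode Code.id)) + 4)
  omega

theorem infinite_compl_range_encode_curry (c : Code) :
    (Set.range fun n => encode (curry c n))ᶜ.Infinite := by
  refine Set.infinite_of_injective_forall_mem (f := fun k => 2 * k + 1)
    (fun a b hab => by simpa using hab) fun k ⟨n, hn⟩ => ?_
  simp only [curry, encodeCode_eq, encodeCode] at hn
  omega

theorem selfConstructing_image {B : Set ℕ} (hne : B.Nonempty) {h : ℕ → ℕ}
    (hW : ∀ n, W (h n) = h '' B) : SelfConstructing (h '' B) :=
  ⟨hne.image h, ⟨h 0, hW 0⟩, by rintro _ ⟨b, -, rfl⟩; exact hW b⟩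

theorem stmt_9 (B : Set ℕ) (hB : CE B) (hne : B.Nonempty)
    (hdisj : ∃ E : Set ℕ, E.Infinite ∧ ComputablePred (· ∈ E) ∧ Disjoint B E) :
    ∃ π : ℕ ≃ ℕ, Computable (π : ℕ → ℕ) ∧ Computable (π.symm : ℕ → ℕ) ∧
      SelfConstructing ((π : ℕ → ℕ) ⁻¹' B) := by
  obtain ⟨E, hE, hEc, hBE⟩ := hdisj
  obtain ⟨c, hW⟩ := exists_code_W_curry_eq_image hB hne
  have hm := encode_curry_strictMono c
  have hh : Primrec fun b => encode (curry c b) :=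
    Primrec.encode.comp (primrec₂_curry.comp (.const c) .id)
  obtain ⟨π, hπ, hπsymm, hpre⟩ := exists_computable_equiv_preimage_eq_image hE hEc hBE hm
    (hm.primrecPred_mem_range hh).computablePred (infinite_compl_range_encode_curry c)
  exact ⟨π, hπ, hπsymm, hpre ▸ selfConstructing_image hne hW⟩
end

section
/- For every positive integer k there exists a self-constructing set of cardinality exactly k. -/
/-! By the recursion theorem with a parameter there is a code `c` whose domain is the set of
codes of its first `k` paddings `c`, `c ∘ id`, `c ∘ id ∘ id`, …: this set is decidable uniformly
in `c`. Each padding computes the same function as `c`, so every element of the set is an index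
of the set itself, and padding strictly increases the code, so the set has exactly `k` elements. -/

open Nat.Partrec Encodable

namespace Nat.Partrec.Code

def pad (c : Code) (i : ℕ) : Code := (fun d => d.comp Code.id)^[i] c

theorem pad_succ (c : Code) (i : ℕ) : c.pad (i + 1) = (c.pad i).comp Code.id :=
  Function.iterate_succ_apply' _ _ _

theorem eval_pad (c : Code) (i : ℕ) : (c.pad i).eval = c.eval := by
  induction i with
  | zero => rfl
  | succ i ih =>
    funext n
    simp only [pad_succ, eval, eval_id, ih]
    exact Part.bind_some n c.eval

theorem strictMono_encode_pad (c : Code) : StrictMono fun i => encode (c.pad i) :=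
  strictMono_nat_of_lt_succ fun i => by
    simpa only [pad_succ] using (encode_lt_comp (c.pad i) Code.id).1

theorem primrec₂_pad : Primrec₂ pad :=
  .nat_iterate .snd .fst (primrec₂_comp.comp .snd (.const Code.id))

theorem exists_forall_eval_dom_iff {p : Code → ℕ → Prop}
    (hp : REPred fun x : Code × ℕ => p x.1 x.2) :
    ∃ c : Code, ∀ n, (c.eval n).Dom ↔ p c n := by
  obtain ⟨c, hc⟩ := fixed_point₂ (hp.map (Computable.const 0).to₂).to₂
  exact ⟨c, fun n => by simp [hc, Part.assert]⟩

end Nat.Partrec.Code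

open Nat.Partrec.Code

theorem W_encode (c : Code) : W (encode c) = {n | (c.eval n).Dom} := by
  simp [W, phi, Denumerable.ofNat_encode, PFun.Dom]

def paddedCodes (k : ℕ) (c : Code) : Set ℕ := (fun i => encode (c.pad i)) '' Set.Iio k

theorem ncard_paddedCodes (k : ℕ) (c : Code) : (paddedCodes k c).ncard = k := by
  rw [paddedCodes, Set.ncard_image_of_injective _ (strictMono_encode_pad c).injective,
    Set.ncard_Iio_nat]

theorem rePred_mem_paddedCodes (k : ℕ) :
    REPred fun x : Code × ℕ => x.2 ∈ paddedCodes k x.1 := by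
  have hlist : Primrec fun c : Code => (List.range k).map fun i => encode (c.pad i) :=
    Primrec.list_map (Primrec.const _) (Primrec.encode.comp primrec₂_pad).to₂
  have hmem : PrimrecPred fun x : Code × ℕ =>
      ∃ m ∈ (List.range k).map (fun i => encode (x.1.pad i)), m = x.2 :=
    (PrimrecRel.exists_mem_list Primrec.eq).comp (hlist.comp .fst) .snd
  exact hmem.computablePred.to_re.of_eq fun x => by simp [paddedCodes]

theorem exists_selfConstructing_paddedCodes {k : ℕ} (hk : 0 < k) :
    ∃ c, SelfConstructing (paddedCodes k c) := by
  obtain ⟨c, hc⟩ := exists_forall_eval_dom_iff (p := fun c n => n ∈ paddedCodes k c)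
    (rePred_mem_paddedCodes k)
  have hW : ∀ e ∈ paddedCodes k c, W e = paddedCodes k c := by
    rintro _ ⟨i, -, rfl⟩
    ext n
    simp [W_encode, eval_pad, hc]
  exact ⟨c, ⟨_, 0, hk, rfl⟩, ⟨_, hW _ ⟨0, hk, rfl⟩⟩, hW⟩

theorem stmt_11 (k : ℕ) (hk : 0 < k) :
    ∃ A : Set ℕ, SelfConstructing A ∧ A.ncard = k := by
  obtain ⟨c, hc⟩ := exists_selfConstructing_paddedCodes hk
  exact ⟨_, hc, ncard_paddedCodes k c⟩
end

section
/- There exists a self-constructing set that is not computable. -/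
open Encodable Nat.Partrec Nat.Partrec.Code

theorem Nat.mem_rfind_decide_eq_iff {g : ℕ → ℕ} (hg : Function.Injective g) {x n : ℕ} :
    n ∈ Nat.rfind (fun k => Part.some (decide (g k = x))) ↔ g n = x := by
  refine ⟨fun h => by simpa using Nat.rfind_spec h, fun h => Nat.mem_rfind.2 ⟨by simpa, ?_⟩⟩
  intro m hm
  simpa [← h] using hg.ne hm.ne

theorem REPred.image_of_injective {α : Type*} [Primcodable α] {S : Set ℕ}
    (hS : REPred (· ∈ S)) {g : α → ℕ → ℕ} (hg : Computable₂ g)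
    (hinj : ∀ a, Function.Injective (g a)) :
    REPred fun p : α × ℕ => p.2 ∈ g p.1 '' S := by
  -- by injectivity the least `n` with `g a n = x` is the only candidate: no dovetailing needed
  have hsearch : Partrec fun p : α × ℕ =>
      Nat.rfind fun n => Part.some (decide (g p.1 n = p.2)) :=
    Partrec.rfind (Primrec.eq.decide.to_comp.comp (hg.comp (Computable.fst.comp Computable.fst)
      Computable.snd) (Computable.snd.comp Computable.fst)).partrec
  refine (hsearch.bind (hS.comp Computable.snd).to₂).dom_re.of_eq fun p => ?_
  simp [Part.dom_iff_mem, Nat.mem_rfind_decide_eq_iff (hinj p.1), and_comm]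

theorem phi_encode (c : Code) : phi (encode c) = eval c := by
  simp [phi, Denumerable.ofNat_encode]

theorem mem_W_encode {c : Code} {x : ℕ} : x ∈ W (encode c) ↔ (eval c x).Dom := by
  rw [W, phi_encode, PFun.mem_dom, Part.dom_iff_mem]

theorem exists_computable_injective_W_eq_image {S : Set ℕ} (hS : REPred (· ∈ S)) :
    ∃ f : ℕ → ℕ, Computable f ∧ Function.Injective f ∧ ∀ m, W (f m) = f '' S := by
  have hcurry : Computable₂ fun c n => encode (curry c n) :=
    Computable.encode.comp₂ primrec₂_curry.to_comp
  have hinj : ∀ c, Function.Injective fun n => encode (curry c n) := fun _ =>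
    encode_injective.comp fun _ _ h => (curry_inj h).2
  have hre := hS.image_of_injective hcurry hinj
  obtain ⟨c, hc⟩ := fixed_point₂ (f := fun c y =>
    (Part.assert (y.unpair.2 ∈ (fun n => encode (curry c n)) '' S) fun _ => Part.some ()).map
      fun _ => 0) <|
    (hre.comp (Computable.fst.pair
      (Computable.snd.comp (Computable.unpair.comp Computable.snd)))).map (Computable.const 0).to₂
  refine ⟨fun n => encode (curry c n), hcurry.comp (Computable.const c) Computable.id, hinj c,
    fun m => ?_⟩
  ext x
  rw [mem_W_encode, eval_curry, hc]
  simp [Part.dom_iff_mem]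

theorem selfConstructing_image_s13 {S : Set ℕ} {f : ℕ → ℕ} (hS : S.Nonempty)
    (hW : ∀ m, W (f m) = f '' S) : SelfConstructing (f '' S) :=
  ⟨hS.image f, ⟨f 0, hW 0⟩, by rintro _ ⟨m, -, rfl⟩; exact hW m⟩

def haltingSet : Set ℕ := {e | 0 ∈ W e}

theorem haltingSet_nonempty : haltingSet.Nonempty :=
  ⟨encode Code.zero, mem_W_encode.2 trivial⟩

theorem rePred_mem_haltingSet : REPred (· ∈ haltingSet) :=
  (eval_part.comp (Computable.ofNat Code) (Computable.const 0)).dom_re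

theorem not_computablePred_mem_haltingSet : ¬ComputablePred (· ∈ haltingSet) := fun h =>
  ComputablePred.halting_problem 0 <| ComputablePred.computable_of_manyOneReducible
    ⟨encode, Computable.encode, fun _ => mem_W_encode.symm⟩ h

theorem stmt_13 :
    ∃ A : Set ℕ, SelfConstructing A ∧ ¬ ComputablePred (· ∈ A) := by
  obtain ⟨f, hf, hinj, hW⟩ := exists_computable_injective_W_eq_image rePred_mem_haltingSet
  refine ⟨f '' haltingSet, selfConstructing_image_s13 haltingSet_nonempty hW, fun h => ?_⟩
  exact not_computablePred_mem_haltingSet <| ComputablePred.computable_of_oneOneReducible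
    ⟨f, hf, hinj, fun _ => hinj.mem_set_image.symm⟩ h
end
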